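/- There exists a real X, a computable strictly increasing sequence of positions (ℓ_n) with X(ℓ_n − 1) = 0 for all n (so X is not Martin-Löf random), and an X-computable strictly increasing sequence (r_n) such that K(X↾r_n) > r_n for all n. -/

import Mathlib

open scoped Classical ENNReal

/-- The first `n` bits of an infinite binary sequence. -/
def seg (X : ℕ → Bool) (n : ℕ) : List Bool := (List.range n).map X

/-- A computably enumerable predicate. -/
def CEPred {α : Type} [Primcodable α] (p : α → Prop) : Prop :=
  Partrec fun a => Part.assert (p a) fun _ => Part.some ()

/-- A set of strings is prefix-free. -/
def PrefixFreeSet (S : Set (List Bool)) : Prop :=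
  ∀ p q, p ∈ S → q ∈ S → p <+: q → p = q

/-- A prefix-free machine with outputs in `β`. -/
structure PFM (β : Type) [Primcodable β] where
  M : List Bool →. β
  comp : Partrec M
  pf : PrefixFreeSet {p | (M p).Dom}

/-- Kolmogorov complexity relative to a machine. -/
noncomputable def PFM.K {β : Type} [Primcodable β] (U : PFM β) (x : β) : ℕ :=
  sInf {n | ∃ p : List Bool, p.length = n ∧ x ∈ U.M p}

/-- An optimal (universal) prefix-free machine. -/
def PFM.Optimal {β : Type} [Primcodable β] (U : PFM β) : Prop :=
  (∀ x : β, ∃ p, x ∈ U.M p) ∧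
  ∀ N : PFM β, ∃ c : ℕ, ∀ p x, x ∈ N.M p → ∃ q, x ∈ U.M q ∧ q.length ≤ p.length + c

/-- The (chosen) shortest description of `x` on machine `U`. -/
noncomputable def PFM.star {β : Type} [Primcodable β] (U : PFM β)
    (h : ∀ x : β, ∃ p, x ∈ U.M p) (x : β) : List Bool :=
  Classical.choose (show ∃ p : List Bool, p.length = U.K x ∧ x ∈ U.M p from by
    have hne : {n | ∃ p : List Bool, p.length = n ∧ x ∈ U.M p}.Nonempty := by
      obtain ⟨p, hp⟩ := h x
      exact ⟨p.length, p, rfl, hp⟩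
    exact Nat.sInf_mem hne)

/-- A conditional prefix-free machine: the first argument is the oracle (condition) string,
the second the program; it is prefix-free on programs for each fixed condition. -/
structure CPFM (β : Type) [Primcodable β] where
  M : List Bool → List Bool →. β
  comp : Partrec₂ M
  pf : ∀ ρ, PrefixFreeSet {p | (M ρ p).Dom}

/-- Conditional Kolmogorov complexity `K(x | ρ)`. -/
noncomputable def CPFM.K {β : Type} [Primcodable β] (U : CPFM β) (ρ : List Bool) (x : β) : ℕ :=
  sInf {n | ∃ p : List Bool, p.length = n ∧ x ∈ U.M ρ p}

/-- An optimal conditional prefix-free machine. -/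
def CPFM.Optimal {β : Type} [Primcodable β] (U : CPFM β) : Prop :=
  (∀ ρ (x : β), ∃ p, x ∈ U.M ρ p) ∧
  ∀ N : CPFM β, ∃ c : ℕ, ∀ ρ p x, x ∈ N.M ρ p → ∃ q, x ∈ U.M ρ q ∧ q.length ≤ p.length + c

/-- A Martin-Löf test: a uniformly c.e. sequence of sets of strings generating open sets,
with the `n`-th level having total cylinder weight at most `2⁻ⁿ`. -/
structure MLTest where
  W : ℕ → Set (List Bool)
  ce : CEPred fun p : ℕ × List Bool => p.2 ∈ W p.1
  meas : ∀ n, (∑' σ : W n, ((2 : ℝ≥0∞))⁻¹ ^ (σ : List Bool).length) ≤ 2⁻¹ ^ n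

/-- `X` is Martin-Löf random iff it passes every Martin-Löf test. -/
def MLRandom (X : ℕ → Bool) : Prop :=
  ∀ T : MLTest, ∃ n, ∀ σ ∈ T.W n, seg X σ.length ≠ σ

/-- A Turing functional with oracle strings, inputs in ℕ and outputs in `β`:
computable and monotone (consistent) in the oracle. -/
structure TFun (β : Type) [Primcodable β] where
  φ : List Bool → ℕ →. β
  comp : Partrec₂ φ
  mono : ∀ ρ₀ ρ₁ : List Bool, ρ₀ <+: ρ₁ → ∀ n (y : β), y ∈ φ ρ₀ n → y ∈ φ ρ₁ n

/-- `Φ^X(n) = y`. -/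
def TFun.evalOracle {β : Type} [Primcodable β] (Φ : TFun β) (X : ℕ → Bool) (n : ℕ) (y : β) :
    Prop := ∃ s, y ∈ Φ.φ (seg X s) n

/-- `f` is computable from the oracle `X`. -/
def ComputableFrom {β : Type} [Primcodable β] (X : ℕ → Bool) (f : ℕ → β) : Prop :=
  ∃ Φ : TFun β, ∀ n, Φ.evalOracle X n (f n)

/-- The sequence `r` is pointedly `X`-computable. -/
def PointedlyComputable (X : ℕ → Bool) (r : ℕ → ℕ) : Prop :=
  StrictMono r ∧ ∃ Φ : TFun ℕ, ∀ n, r n ∈ Φ.φ (seg X (r n)) n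

/-- The set `A` is computable from the oracle `X`. -/
def SetComputableFrom (X : ℕ → Bool) (A : ℕ → Prop) : Prop :=
  ∃ Φ : TFun Bool, ∀ n, ∃ b, Φ.evalOracle X n b ∧ (b = true ↔ A n)

/-- The halting problem. -/
def HaltingSet (n : ℕ) : Prop :=
  ((Denumerable.ofNat Nat.Partrec.Code n).eval n).Dom


/-!
`X` is built in stages. At stage `n` the prefix `τ` built so far is extended to a string `σ`
with `K(σ) > |σ|` that carries `0` at every position `2 ^ 2 ^ k` beyond `τ`. Such a `σ` exists
by counting: by Kraft's inequality the strings `σ` with `K(σ) ≤ |σ|` have total weight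
`∑ 2 ^ (-|σ|) ≤ 1`, so some length `r` in a block `(2 ^ 2 ^ k, 2 ^ 2 ^ (k + 1)]` has fewer than
`2 ^ (r - (2k - 1))` of them, while at most `2k - 1` bits of `σ` are prescribed.

The number `r_n = |σ|` is then recorded by zeros followed by a single `1` at the position
`2 ^ 2 ^ (2j + 1)`, where `j = ⟨n, r_n⟩` is the Cantor pairing. An oracle for `X` finds `r_n` as
the second component of the least `j` with first component `n` whose flag position holds a `1`.
The positions `2 ^ 2 ^ (2k)` always hold `0`: they give `ℓ` and a Martin-Löf test that `X` fails.
-/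

open Finset

theorem PrefixFreeSet.mono {S T : Set (List Bool)} (hT : PrefixFreeSet T) (h : S ⊆ T) :
    PrefixFreeSet S :=
  fun p q hp hq => hT p q (h hp) (h hq)

theorem PrefixFreeSet.uniquelyDecodable {S : Set (List Bool)} (hS : PrefixFreeSet S)
    (hnil : [] ∉ S) : InformationTheory.UniquelyDecodable S := by
  intro L₁
  induction L₁ with
  | nil =>
    rintro (_ | ⟨b, L₂⟩) - h₂ heq
    · rfl
    · have hb : b = [] := (by simpa using heq.symm : b = [] ∧ _).1
      exact (hnil (hb ▸ h₂ b (by simp))).elim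
  | cons a L₁ ih =>
    rintro (_ | ⟨b, L₂⟩) h₁ h₂ heq
    · have ha : a = [] := (by simpa using heq : a = [] ∧ _).1
      exact (hnil (ha ▸ h₁ a (by simp))).elim
    · simp only [List.flatten_cons] at heq
      have hab : a = b := by
        rcases List.prefix_or_prefix_of_prefix (List.prefix_append a L₁.flatten)
          (heq ▸ List.prefix_append b L₂.flatten) with h | h
        · exact hS a b (h₁ a (by simp)) (h₂ b (by simp)) h
        · exact (hS b a (h₂ b (by simp)) (h₁ a (by simp)) h).symm
      subst hab
      rw [ih L₂ (fun w hw => h₁ w (by simp [hw])) (fun w hw => h₂ w (by simp [hw]))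
        (List.append_cancel_left heq)]

theorem PrefixFreeSet.sum_le_one {S : Set (List Bool)} (hS : PrefixFreeSet S)
    {P : Finset (List Bool)} (hP : ↑P ⊆ S) : ∑ p ∈ P, (2⁻¹ : ℝ) ^ p.length ≤ 1 := by
  by_cases hnil : [] ∈ P
  · have : P = {[]} := eq_singleton_iff_unique_mem.2
      ⟨hnil, fun p hp => (hS [] p (hP hnil) (hP hp) List.nil_prefix).symm⟩
    simp [this]
  · simpa using InformationTheory.kraft_mcmillan_inequality
      ((hS.mono hP).uniquelyDecodable (by simpa using hnil))

theorem PFM.star_spec {β : Type} [Primcodable β] (U : PFM β) (h : ∀ x : β, ∃ p, x ∈ U.M p)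
    (x : β) : (U.star h x).length = U.K x ∧ x ∈ U.M (U.star h x) :=
  Classical.choose_spec (p := fun p => p.length = U.K x ∧ x ∈ U.M p) _

theorem card_filter_forall_mem_eq {α : Type*} [Fintype α] [DecidableEq α] (s : Finset α)
    (g : α → Bool) [DecidablePred fun f : α → Bool => ∀ a ∈ s, f a = g a] :
    #{f : α → Bool | ∀ a ∈ s, f a = g a} = 2 ^ #sᶜ := by
  have : ({f : α → Bool | ∀ a ∈ s, f a = g a} : Finset _) =
      Fintype.piFinset fun a => if a ∈ s then {g a} else univ := by
    ext f
    simp only [mem_filter, mem_univ, true_and, Fintype.mem_piFinset]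
    exact forall_congr' fun a => by split_ifs with ha <;> simp [ha]
  rw [this, Fintype.card_piFinset, ← prod_mul_prod_compl s,
    prod_eq_one fun a ha => by simp [ha], one_mul]
  exact (prod_congr rfl fun a ha => by simp [mem_compl.1 ha]).trans (prod_const 2)

theorem card_filter_forall_mem_eq_mul {r : ℕ} (s : Finset (Fin r)) (g : Fin r → Bool) :
    #{f : Fin r → Bool | ∀ i ∈ s, f i = g i} * 2 ^ #s = 2 ^ r := by
  rw [card_filter_forall_mem_eq, ← pow_add, card_compl_add_card, Fintype.card_fin]

theorem List.IsPrefix.getD_eq {l₁ l₂ : List Bool} (h : l₁ <+: l₂) {i : ℕ} (hi : i < l₁.length)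
    (d : Bool) : l₂.getD i d = l₁.getD i d := by
  obtain ⟨t, rfl⟩ := h
  exact List.getD_append _ _ _ _ hi

theorem List.lt_length_of_getD_eq_true {l : List Bool} {i : ℕ} (h : l.getD i false = true) :
    i < l.length := by
  by_contra hi
  rw [List.getD_eq_default _ _ (not_lt.1 hi)] at h
  exact Bool.false_ne_true h

theorem List.getD_append_replicate_append_true (l : List Bool) (k i : ℕ) :
    (l ++ List.replicate k false ++ [true]).getD i false =
      (l.getD i false || decide (i = l.length + k)) := by
  rw [List.append_assoc]
  rcases lt_or_ge i l.length with h | h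
  · rw [List.getD_append _ _ _ _ h]
    simp [show i ≠ l.length + k by omega]
  · rw [List.getD_eq_default l _ h, List.getD_append_right _ _ _ _ h, Bool.false_or]
    rcases lt_trichotomy (i - l.length) k with h' | h' | h'
    · rw [List.getD_append _ _ _ _ (by simpa)]
      simp [List.getD_eq_getElem?_getD, h', show i ≠ l.length + k by omega]
    · rw [List.getD_append_right _ _ _ _ (by simp [h'])]
      simp [h']
      omega
    · rw [List.getD_eq_default _ _ (by simp; omega)]
      simp only [false_eq_decide_iff]
      omega

theorem getD_seg (X : ℕ → Bool) {L i : ℕ} (hi : i < L) (d : Bool) :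
    (seg X L).getD i d = X i := by
  simp [seg, List.getD_eq_getElem?_getD, hi]

theorem seg_eq_of_getD {X : ℕ → Bool} {σ : List Bool}
    (h : ∀ i < σ.length, X i = σ.getD i false) : seg X σ.length = σ :=
  List.ext_getElem (by simp [seg]) fun i _ hi => by
    rw [← List.getD_eq_getElem σ false hi, ← h i hi]
    simp [seg]

theorem Primrec.list_all {α β : Type*} [Primcodable α] [Primcodable β] {f : α → List β}
    {p : α → β → Bool} (hf : Primrec f) (hp : Primrec₂ p) : Primrec fun a => (f a).all (p a) :=
  (list_foldr hf (const true) (Primrec.and.comp (hp.comp fst (fst.comp snd))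
    (snd.comp snd)).to₂).of_eq fun a => by induction f a <;> simp [*]

theorem Primrec.nat_pow : Primrec₂ ((· ^ ·) : ℕ → ℕ → ℕ) :=
  Primrec₂.unpaired'.1 Nat.Primrec.pow

theorem CEPred.of_primrecPred {α : Type} [Primcodable α] {p : α → Prop} (hp : PrimrecPred p) :
    CEPred p :=
  (Computable.ofOption (Primrec.ite hp (Primrec.const (some ()))
    (Primrec.const none)).to_comp).of_eq
    fun a => by by_cases h : p a <;> simp [h, Part.assert_pos, Part.assert_neg]

def sparsePos (k : ℕ) : ℕ := 2 ^ 2 ^ k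

def flagPos (j : ℕ) : ℕ := sparsePos (2 * j + 1)

def zeroPos (k : ℕ) : ℕ := sparsePos (2 * k)

theorem sparsePos_strictMono : StrictMono sparsePos := fun _ _ h =>
  Nat.pow_lt_pow_right one_lt_two (Nat.pow_lt_pow_right one_lt_two h)

theorem lt_sparsePos (k : ℕ) : k < sparsePos k :=
  Nat.lt_two_pow_self.trans (Nat.pow_lt_pow_right one_lt_two Nat.lt_two_pow_self)

theorem sparsePos_succ (k : ℕ) : sparsePos (k + 1) = sparsePos k * sparsePos k := by
  rw [sparsePos, sparsePos, pow_succ, pow_mul, sq]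

theorem flagPos_strictMono : StrictMono flagPos :=
  sparsePos_strictMono.comp fun _ _ h => by omega

theorem zeroPos_strictMono : StrictMono zeroPos :=
  sparsePos_strictMono.comp fun _ _ h => by omega

theorem lt_flagPos (j : ℕ) : j < flagPos j :=
  (by omega : j < 2 * j + 1).trans (lt_sparsePos _)

theorem flagPos_ne_zeroPos (j k : ℕ) : flagPos j ≠ zeroPos k := fun h => by
  have := sparsePos_strictMono.injective h
  omega

theorem primrec_sparsePos : Primrec sparsePos :=
  Primrec.nat_pow.comp (Primrec.const 2) (Primrec.nat_pow.comp (Primrec.const 2) Primrec.id)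

theorem primrec_flagPos : Primrec flagPos := primrec_sparsePos.comp Primrec.nat_double_succ

theorem primrec_zeroPos : Primrec zeroPos := primrec_sparsePos.comp Primrec.nat_double

noncomputable def compressible (U : PFM (List Bool)) (r : ℕ) : Finset (Fin r → Bool) :=
  {f | U.K (List.ofFn f) ≤ r}

section Compressible

variable {U : PFM (List Bool)}

/-- Distinct compressible strings have distinct shortest programs, which form a prefix-free set. -/
theorem sum_card_compressible_le_one (hU : ∀ x, ∃ p, x ∈ U.M p) (F : Finset ℕ) :
    ∑ r ∈ F, (#(compressible U r) : ℝ) * 2⁻¹ ^ r ≤ 1 := by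
  set prog := fun x : Σ r, Fin r → Bool => U.star hU (List.ofFn x.2)
  have hinj : Set.InjOn prog ↑(F.sigma (compressible U)) := fun x _ y _ h => by
    have hy : List.ofFn y.2 ∈ U.M (prog x) := h ▸ (U.star_spec hU _).2
    exact List.ofFn_inj'.1 (Part.mem_unique (U.star_spec hU _).2 hy)
  calc ∑ r ∈ F, (#(compressible U r) : ℝ) * 2⁻¹ ^ r
      = ∑ x ∈ F.sigma (compressible U), (2⁻¹ : ℝ) ^ x.1 := by simp [sum_sigma]
    _ ≤ ∑ x ∈ F.sigma (compressible U), (2⁻¹ : ℝ) ^ (prog x).length := by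
        refine sum_le_sum fun x hx => pow_le_pow_of_le_one (by norm_num) (by norm_num) ?_
        rw [(U.star_spec hU _).1]
        simpa [compressible] using (mem_sigma.1 hx).2
    _ = ∑ p ∈ (F.sigma (compressible U)).image prog, (2⁻¹ : ℝ) ^ p.length :=
        (sum_image (f := fun p => (2⁻¹ : ℝ) ^ p.length) hinj).symm
    _ ≤ 1 := U.pf.sum_le_one <| by
        simp only [coe_image, Set.image_subset_iff]
        exact fun x _ => Part.dom_iff_mem.2 ⟨_, (U.star_spec hU _).2⟩

theorem exists_card_compressible_mul_lt (hU : ∀ x, ∃ p, x ∈ U.M p) {F : Finset ℕ} {N : ℕ}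
    (hF : 2 ^ N < #F) :
    ∃ r ∈ F, #(compressible U r) * 2 ^ N < 2 ^ r := by
  by_contra! h
  have hterm : ∀ r ∈ F, (2⁻¹ : ℝ) ^ N ≤ #(compressible U r) * 2⁻¹ ^ r := fun r hr => by
    have : (2 : ℝ) ^ r ≤ #(compressible U r) * 2 ^ N := by exact_mod_cast h r hr
    rw [inv_pow, inv_pow, ← div_eq_mul_inv, le_div_iff₀ (by positivity),
      inv_mul_le_iff₀ (by positivity), mul_comm]
    exact this
  have : (#F : ℝ) * 2⁻¹ ^ N ≤ 1 := calc
    (#F : ℝ) * 2⁻¹ ^ N = ∑ r ∈ F, (2⁻¹ : ℝ) ^ N := by simp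
    _ ≤ ∑ r ∈ F, (#(compressible U r) : ℝ) * 2⁻¹ ^ r := sum_le_sum hterm
    _ ≤ 1 := sum_card_compressible_le_one hU F
  rw [inv_pow, ← div_eq_mul_inv, div_le_one (by positivity)] at this
  exact hF.not_ge (by exact_mod_cast this)

theorem exists_length_card_compressible_mul_lt (hU : ∀ x, ∃ p, x ∈ U.M p) (m : ℕ) :
    ∃ r, sparsePos (m + 2) < r ∧ r ≤ sparsePos (m + 3) ∧
      #(compressible U r) * 2 ^ (2 * m + 3) < 2 ^ r := by
  have h₁ : 2 ^ (2 * m + 3) < sparsePos (m + 2) := Nat.pow_lt_pow_right one_lt_two <| by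
    rw [pow_add]
    have := Nat.lt_two_pow_self (n := m)
    omega
  have h₂ : 2 ≤ sparsePos (m + 2) := (Nat.one_lt_two_pow (by omega)).trans_le h₁.le
  obtain ⟨r, hr, hcard⟩ := exists_card_compressible_mul_lt hU
    (F := Ioc (sparsePos (m + 2)) (sparsePos (m + 3))) (N := 2 * m + 3) <| by
      have : sparsePos (m + 2) + sparsePos (m + 2) ≤ sparsePos (m + 2) * sparsePos (m + 2) := by
        nlinarith
      rw [Nat.card_Ioc, sparsePos_succ]
      omega
  exact ⟨r, (mem_Ioc.1 hr).1, (mem_Ioc.1 hr).2, hcard⟩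

theorem exists_forall_mem_eq_lt_K {r N : ℕ} (hr : #(compressible U r) * 2 ^ N < 2 ^ r)
    (s : Finset (Fin r)) (hs : #s ≤ N) (g : Fin r → Bool) :
    ∃ f : Fin r → Bool, (∀ i ∈ s, f i = g i) ∧ r < U.K (List.ofFn f) := by
  have hC : #(compressible U r) < #{f : Fin r → Bool | ∀ i ∈ s, f i = g i} := by
    refine Nat.lt_of_mul_lt_mul_right (a := 2 ^ N) (hr.trans_le ?_)
    rw [← card_filter_forall_mem_eq_mul s g]
    exact Nat.mul_le_mul_left _ (Nat.pow_le_pow_right two_pos hs)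
  obtain ⟨f, hf, hK⟩ := exists_mem_notMem_of_card_lt_card hC
  exact ⟨f, (mem_filter.1 hf).2, by simpa [compressible] using hK⟩

theorem exists_incompressible_extension (hU : ∀ x, ∃ p, x ∈ U.M p) (τ : List Bool) :
    ∃ σ, τ <+: σ ∧ τ.length < σ.length ∧
      (∀ i ∈ Set.range sparsePos, τ.length ≤ i → σ.getD i false = false) ∧
      σ.length < U.K σ := by
  obtain ⟨r, hr₁, hr₂, hr⟩ := exists_length_card_compressible_mul_lt hU τ.length
  have hτr : τ.length < r := by
    have := lt_sparsePos (τ.length + 2)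
    omega
  -- the prescribed bits: those of `τ`, and zeros at the sparse positions below `r`
  set P := range τ.length ∪ (range (τ.length + 3)).image sparsePos
  have hP : ∀ i ∈ P, i < r := by
    simp only [P, mem_union, mem_range, mem_image]
    rintro i (hi | ⟨j, hj, rfl⟩)
    · omega
    · exact (sparsePos_strictMono.monotone (by omega : j ≤ τ.length + 2)).trans_lt hr₁
  have hcard : #(P.attachFin hP) ≤ 2 * τ.length + 3 := by
    rw [card_attachFin]
    refine (card_union_le _ _).trans ?_
    have := card_image_le (s := range (τ.length + 3)) (f := sparsePos)
    simp only [card_range] at this ⊢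
    omega
  obtain ⟨f, hf, hK⟩ := exists_forall_mem_eq_lt_K hr _ hcard fun i => τ.getD i false
  have hf' : ∀ i (hi : i < r), i ∈ P → f ⟨i, hi⟩ = τ.getD i false :=
    fun i hi hiP => hf ⟨i, hi⟩ (mem_attachFin _ |>.2 hiP)
  refine ⟨List.ofFn f, ?_, by simpa using hτr, ?_, by simpa using hK⟩
  · rw [List.prefix_iff_getElem]
    refine ⟨by simp; omega, fun i hi => ?_⟩
    rw [List.getElem_ofFn, hf' i (by omega) (by simp [P, hi]), List.getD_eq_getElem _ _ hi]
  · rintro i ⟨j, rfl⟩ hτi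
    rw [List.getD_eq_getElem?_getD, List.getElem?_ofFn]
    split_ifs with h
    · have : j < τ.length + 3 := sparsePos_strictMono.lt_iff_lt.1 (h.trans_le hr₂)
      rw [Option.getD_some, hf' _ h (mem_union_right _ (mem_image_of_mem _ (mem_range.2 this))),
        List.getD_eq_default _ _ hτi]
    · rfl

end Compressible

def flagFor (n : ℕ) (ρ : List Bool) (j : ℕ) : Bool := ρ.getD (flagPos j) false && j.unpair.1 == n

def firstFlag (n : ℕ) (ρ : List Bool) : ℕ := (List.range ρ.length).findIdx (flagFor n ρ)

/-- Reading off the least flag tagged `n` makes the decoder monotone in the oracle string. -/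
def decodeCut (ρ : List Bool) (n : ℕ) : Option ℕ :=
  if firstFlag n ρ < ρ.length then some (firstFlag n ρ).unpair.2 else none

theorem firstFlag_eq_iff {n j : ℕ} {ρ : List Bool} (hj : j < ρ.length) :
    firstFlag n ρ = j ↔ flagFor n ρ j ∧ ∀ i < j, flagFor n ρ i = false := by
  rw [firstFlag, List.findIdx_eq (by simpa using hj)]
  simp only [List.getElem_range]

theorem decodeCut_eq_some {n j : ℕ} {ρ : List Bool} (hj : j < ρ.length) (hflag : flagFor n ρ j)
    (hmin : ∀ i < j, flagFor n ρ i = false) : decodeCut ρ n = some j.unpair.2 := by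
  rw [decodeCut, (firstFlag_eq_iff hj).2 ⟨hflag, hmin⟩, if_pos hj]

theorem exists_of_decodeCut_eq_some {n y : ℕ} {ρ : List Bool} (h : decodeCut ρ n = some y) :
    ∃ j < ρ.length, flagFor n ρ j ∧ (∀ i < j, flagFor n ρ i = false) ∧ j.unpair.2 = y := by
  unfold decodeCut at h
  split_ifs at h with hlt
  obtain ⟨hflag, hmin⟩ := (firstFlag_eq_iff hlt).1 rfl
  exact ⟨_, hlt, hflag, hmin, Option.some_inj.1 h⟩

theorem decodeCut_mono {ρ₀ ρ₁ : List Bool} (h : ρ₀ <+: ρ₁) {n y : ℕ}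
    (hy : decodeCut ρ₀ n = some y) : decodeCut ρ₁ n = some y := by
  obtain ⟨j, hj, hflag, hmin, rfl⟩ := exists_of_decodeCut_eq_some hy
  have hpos : flagPos j < ρ₀.length :=
    List.lt_length_of_getD_eq_true (Bool.and_eq_true_iff.1 hflag).1
  have hagree : ∀ i ≤ j, flagFor n ρ₁ i = flagFor n ρ₀ i := fun i hi => by
    rw [flagFor, flagFor, h.getD_eq ((flagPos_strictMono.monotone hi).trans_lt hpos)]
  refine decodeCut_eq_some (hj.trans_le h.length_le) (by rw [hagree j le_rfl]; exact hflag)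
    fun i hi => by rw [hagree i hi.le]; exact hmin i hi

open Primrec in
theorem primrec_decodeCut : Primrec fun p : List Bool × ℕ => decodeCut p.1 p.2 := by
  have hflag : Primrec₂ fun (p : List Bool × ℕ) (j : ℕ) => flagFor p.2 p.1 j :=
    Primrec.and.comp ((list_getD false).comp (fst.comp fst) (primrec_flagPos.comp snd))
      (Primrec.beq.comp (fst.comp (unpair.comp snd)) (snd.comp fst))
  have hfirst : Primrec fun p : List Bool × ℕ => firstFlag p.2 p.1 :=
    list_findIdx (list_range.comp (list_length.comp fst)) hflag
  exact ite (nat_lt.comp hfirst (list_length.comp fst))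
    (option_some.comp (snd.comp (unpair.comp hfirst))) (const none)

def cutDecoder : TFun ℕ where
  φ ρ n := decodeCut ρ n
  comp := Computable.ofOption primrec_decodeCut.to_comp
  mono _ _ h _ _ hy := by
    rw [Part.mem_ofOption] at hy ⊢
    exact decodeCut_mono h hy

theorem tsum_inv_two_pow_length_le {L : ℕ} (s : Finset (Fin L)) {W : Set (List Bool)}
    (hW : ∀ σ ∈ W, σ.length = L ∧ ∀ i ∈ s, σ.getD i false = false) :
    ∑' σ : W, (2 : ℝ≥0∞)⁻¹ ^ (σ : List Bool).length ≤ 2⁻¹ ^ #s := by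
  set C : Finset (Fin L → Bool) := {f | ∀ i ∈ s, f i = false}
  have hsub : W ⊆ List.ofFn '' (C : Set (Fin L → Bool)) := fun σ hσ => by
    refine ⟨fun i => σ.getD i false, by simpa [C] using (hW σ hσ).2, ?_⟩
    exact List.ext_getElem (by simp [(hW σ hσ).1]) fun i _ hi => by
      rw [List.getElem_ofFn]
      exact List.getD_eq_getElem _ _ hi
  calc ∑' σ : W, (2 : ℝ≥0∞)⁻¹ ^ (σ : List Bool).length
      = ∑' _ : W, (2 : ℝ≥0∞)⁻¹ ^ L := tsum_congr fun σ => by rw [(hW σ σ.2).1]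
    _ = W.encard * 2⁻¹ ^ L := ENNReal.tsum_set_const _ _
    _ ≤ #C * 2⁻¹ ^ L := by
      gcongr
      exact_mod_cast (Set.encard_le_encard hsub).trans <| (Set.encard_image_le _ _).trans
        (Set.encard_coe_eq_coe_finsetCard C).le
    _ = #C * 2 ^ #s * 2⁻¹ ^ L * 2⁻¹ ^ #s := by
      rw [mul_right_comm _ (2 ^ #s), mul_assoc _ (2 ^ #s), ← mul_pow,
        ENNReal.mul_inv_cancel two_ne_zero ENNReal.ofNat_ne_top, one_pow, mul_one]
    _ = 2⁻¹ ^ #s := by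
      rw [← Nat.cast_ofNat, ← Nat.cast_pow, ← Nat.cast_mul, card_filter_forall_mem_eq_mul,
        Nat.cast_pow, Nat.cast_ofNat, ← mul_pow,
        ENNReal.mul_inv_cancel two_ne_zero ENNReal.ofNat_ne_top, one_pow, one_mul]

def zeroTestSet (n : ℕ) : Set (List Bool) :=
  {σ | σ.length = zeroPos n + 1 ∧ ∀ k ≤ n, σ.getD (zeroPos k) false = false}

open Primrec in
theorem cePred_mem_zeroTestSet : CEPred fun p : ℕ × List Bool => p.2 ∈ zeroTestSet p.1 := by
  have hzeros : Primrec fun p : ℕ × List Bool =>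
      (List.range (p.1 + 1)).all fun k => !p.2.getD (zeroPos k) false :=
    list_all (list_range.comp (succ.comp fst)) (Primrec.not.comp ((list_getD false).comp
      (snd.comp fst) (primrec_zeroPos.comp snd)))
  refine CEPred.of_primrecPred (PrimrecPred.and ?_ ⟨inferInstance, hzeros.of_eq fun p => ?_⟩)
  · exact Primrec.eq.comp (list_length.comp snd) (succ.comp (primrec_zeroPos.comp fst))
  · rw [Bool.eq_iff_iff, List.all_eq_true, decide_eq_true_iff]
    simp

theorem tsum_zeroTestSet_le (n : ℕ) :
    ∑' σ : zeroTestSet n, (2 : ℝ≥0∞)⁻¹ ^ (σ : List Bool).length ≤ 2⁻¹ ^ n := by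
  have hlt : ∀ i ∈ (range (n + 1)).image zeroPos, i < zeroPos n + 1 := by
    simp only [mem_image, mem_range]
    rintro _ ⟨k, hk, rfl⟩
    exact Nat.lt_succ_of_le (zeroPos_strictMono.monotone (by omega))
  set s := ((range (n + 1)).image zeroPos).attachFin hlt
  have hW : ∀ σ ∈ zeroTestSet n, σ.length = zeroPos n + 1 ∧ ∀ i ∈ s, σ.getD i false = false := by
    rintro σ ⟨hlen, hzero⟩
    refine ⟨hlen, fun i hi => ?_⟩
    obtain ⟨k, hk, hki⟩ := mem_image.1 ((mem_attachFin _).1 hi)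
    rw [← hki]
    exact hzero k (by simpa [Nat.lt_succ_iff] using hk)
  have hs : n ≤ #s := by
    rw [card_attachFin, card_image_of_injective _ zeroPos_strictMono.injective, card_range]
    omega
  exact (tsum_inv_two_pow_length_le s hW).trans
    (pow_le_pow_of_le_one zero_le (ENNReal.inv_le_one.2 one_le_two) hs)

def zeroTest : MLTest := ⟨zeroTestSet, cePred_mem_zeroTestSet, tsum_zeroTestSet_le⟩

theorem not_mlRandom_of_zeroPos {X : ℕ → Bool} (hX : ∀ k, X (zeroPos k) = false) :
    ¬ MLRandom X := fun h => by
  obtain ⟨n, hn⟩ := h zeroTest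
  have hmem : seg X (zeroPos n + 1) ∈ zeroTestSet n := ⟨by simp [seg], fun k hk => by
    rw [getD_seg _ (Nat.lt_succ_of_le (zeroPos_strictMono.monotone hk)), hX]⟩
  exact hn _ hmem (by simp [seg])

namespace Construction

variable {U : PFM (List Bool)} (hU : ∀ x, ∃ p, x ∈ U.M p)

noncomputable def extend (τ : List Bool) : List Bool :=
  (exists_incompressible_extension hU τ).choose

theorem extend_spec (τ : List Bool) : τ <+: extend hU τ ∧ τ.length < (extend hU τ).length ∧
    (∀ i ∈ Set.range sparsePos, τ.length ≤ i → (extend hU τ).getD i false = false) ∧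
    (extend hU τ).length < U.K (extend hU τ) :=
  (exists_incompressible_extension hU τ).choose_spec

noncomputable def stage : ℕ → List Bool
  | 0 => []
  | n + 1 =>
    let σ := extend hU (stage n)
    σ ++ List.replicate (flagPos (Nat.pair n σ.length) - σ.length) false ++ [true]

noncomputable def cut (n : ℕ) : ℕ := (extend hU (stage hU n)).length

noncomputable def flagIdx (n : ℕ) : ℕ := Nat.pair n (cut hU n)

noncomputable def X (i : ℕ) : Bool := (stage hU (i + 1)).getD i false

theorem stage_succ (n : ℕ) : stage hU (n + 1) = extend hU (stage hU n) ++
    List.replicate (flagPos (flagIdx hU n) - cut hU n) false ++ [true] :=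
  rfl

theorem cut_lt_flagPos (n : ℕ) : cut hU n < flagPos (flagIdx hU n) :=
  (Nat.right_le_pair _ _).trans_lt (lt_flagPos _)

theorem flagPos_eq_length_extend_add (n : ℕ) : flagPos (flagIdx hU n) =
    (extend hU (stage hU n)).length + (flagPos (flagIdx hU n) - cut hU n) :=
  (Nat.add_sub_cancel' (cut_lt_flagPos hU n).le).symm

theorem length_stage_succ (n : ℕ) : (stage hU (n + 1)).length = flagPos (flagIdx hU n) + 1 := by
  rw [stage_succ, List.length_append, List.length_append, List.length_replicate,
    ← flagPos_eq_length_extend_add, List.length_singleton]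

theorem cut_lt_length_stage_succ (n : ℕ) : cut hU n < (stage hU (n + 1)).length := by
  rw [length_stage_succ]
  exact (cut_lt_flagPos hU n).trans (Nat.lt_succ_self _)

theorem length_stage_lt_cut (n : ℕ) : (stage hU n).length < cut hU n := (extend_spec hU _).2.1

theorem stage_prefix_succ (n : ℕ) : stage hU n <+: stage hU (n + 1) :=
  (extend_spec hU _).1.trans (List.prefix_append_of_prefix (List.prefix_append _ _))

theorem stage_prefix {m n : ℕ} (h : m ≤ n) : stage hU m <+: stage hU n := by
  induction n, h using Nat.le_induction with
  | base => exact List.prefix_refl _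
  | succ n _ ih => exact ih.trans (stage_prefix_succ hU n)

theorem lt_length_stage_succ (n : ℕ) : n < (stage hU (n + 1)).length := by
  induction n with
  | zero => simp [length_stage_succ]
  | succ n ih =>
    have := length_stage_lt_cut hU (n + 1)
    have := cut_lt_flagPos hU (n + 1)
    rw [length_stage_succ]
    omega

theorem getD_stage {n i : ℕ} (hi : i < (stage hU n).length) :
    (stage hU n).getD i false = X hU i := by
  rcases le_total n (i + 1) with h | h
  · exact ((stage_prefix hU h).getD_eq hi false).symm
  · exact (stage_prefix hU h).getD_eq (lt_length_stage_succ hU i) false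

theorem seg_X_cut (n : ℕ) : seg (X hU) (cut hU n) = extend hU (stage hU n) :=
  seg_eq_of_getD fun i hi => by
    rw [← getD_stage hU (hi.trans (cut_lt_length_stage_succ hU n)), stage_succ,
      List.append_assoc]
    exact List.getD_append _ _ _ _ hi

theorem seg_X_stage (n : ℕ) : seg (X hU) (stage hU n).length = stage hU n :=
  seg_eq_of_getD fun _ hi => (getD_stage hU hi).symm

theorem cut_lt_K (n : ℕ) : cut hU n < U.K (seg (X hU) (cut hU n)) := by
  rw [seg_X_cut]
  exact (extend_spec hU _).2.2.2

theorem cut_strictMono : StrictMono (cut hU) := strictMono_nat_of_lt_succ fun n => by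
  have := length_stage_lt_cut hU (n + 1)
  have := cut_lt_length_stage_succ hU n
  omega

theorem getD_stage_sparse {i : ℕ} (hi : i ∈ Set.range sparsePos) :
    ∀ n, (∀ m < n, i ≠ flagPos (flagIdx hU m)) → (stage hU n).getD i false = false
  | 0, _ => rfl
  | n + 1, hflag => by
    rw [stage_succ, List.getD_append_replicate_append_true, ← flagPos_eq_length_extend_add,
      decide_eq_false (hflag n n.lt_succ_self), Bool.or_false]
    rcases lt_or_ge i (stage hU n).length with h | h
    · rw [(extend_spec hU _).1.getD_eq h]
      exact getD_stage_sparse hi n fun m hm => hflag m (hm.trans n.lt_succ_self)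
    · exact (extend_spec hU _).2.2.1 i hi h

theorem X_sparse {i : ℕ} (hi : i ∈ Set.range sparsePos)
    (hflag : ∀ n, i ≠ flagPos (flagIdx hU n)) : X hU i = false :=
  getD_stage_sparse hU hi _ fun m _ => hflag m

theorem X_zeroPos (k : ℕ) : X hU (zeroPos k) = false :=
  X_sparse hU ⟨_, rfl⟩ fun _ => (flagPos_ne_zeroPos _ _).symm

theorem X_flagPos (n : ℕ) : X hU (flagPos (flagIdx hU n)) = true := by
  rw [← getD_stage hU (n := n + 1) (by rw [length_stage_succ]; omega), stage_succ,
    List.getD_append_replicate_append_true, ← flagPos_eq_length_extend_add]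
  simp

theorem exists_eq_flagIdx {j : ℕ} (h : X hU (flagPos j) = true) : ∃ n, j = flagIdx hU n := by
  by_contra! hj
  have := X_sparse hU (i := flagPos j) ⟨2 * j + 1, rfl⟩ fun n hn =>
    hj n (flagPos_strictMono.injective hn)
  exact Bool.false_ne_true (this ▸ h)

theorem decodeCut_stage (n : ℕ) : decodeCut (stage hU (n + 1)) n = some (cut hU n) := by
  have hlen := length_stage_succ hU n
  have hflag : flagFor n (stage hU (n + 1)) (flagIdx hU n) := by
    rw [flagFor, getD_stage hU (by rw [hlen]; exact Nat.lt_succ_self _), X_flagPos]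
    simp [flagIdx]
  have hmin : ∀ i < flagIdx hU n, flagFor n (stage hU (n + 1)) i = false := by
    intro i hi
    by_contra h
    rw [Bool.not_eq_false, flagFor, Bool.and_eq_true] at h
    obtain ⟨hpos, htag⟩ := h
    rw [getD_stage hU (List.lt_length_of_getD_eq_true hpos)] at hpos
    obtain ⟨m, rfl⟩ := exists_eq_flagIdx hU hpos
    simp only [flagIdx, Nat.unpair_pair, beq_iff_eq] at htag
    subst htag
    exact lt_irrefl _ hi
  have hlt : flagIdx hU n < (stage hU (n + 1)).length := by
    rw [hlen]
    exact (lt_flagPos _).trans (Nat.lt_succ_self _)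
  simpa [flagIdx] using decodeCut_eq_some hlt hflag hmin

theorem computableFrom_cut : ComputableFrom (X hU) (cut hU) :=
  ⟨cutDecoder, fun n => ⟨(stage hU (n + 1)).length, by
    rw [seg_X_stage]
    exact Part.mem_ofOption.2 (decodeCut_stage hU n)⟩⟩

end Construction

theorem stmt14 (U : PFM (List Bool)) (hU : U.Optimal) :
    ∃ (X : ℕ → Bool) (ℓ r : ℕ → ℕ),
      Computable ℓ ∧ StrictMono ℓ ∧ (∀ n : ℕ, X (ℓ n - 1) = false) ∧ ¬ MLRandom X ∧
      StrictMono r ∧ ComputableFrom X r ∧ ∀ n : ℕ, r n < U.K (seg X (r n)) := by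
  open Construction in
  exact ⟨X hU.1, fun n => zeroPos n + 1, cut hU.1, (Primrec.succ.comp primrec_zeroPos).to_comp,
    fun _ _ h => Nat.succ_lt_succ (zeroPos_strictMono h), X_zeroPos hU.1,
    not_mlRandom_of_zeroPos (X_zeroPos hU.1), cut_strictMono hU.1, computableFrom_cut hU.1,
    cut_lt_K hU.1⟩
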